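/- arXiv:2402.02199 — 2 statements merged into one kernel-verified Lean document; each statement's English description precedes it below -/
import Mathlib

section
/- For every integer d ≥ 4 there is a unique nonnegative integer r with 3·2^r + r + 1 ≤ d ≤ 3·2^{r+1} + r + 1, and for this r one has b(d) = d²/2 − d(2r+3)/2 + 6·2^r + (r+1)(r+2)/2. -/
/-! Write `f r = repeatIndex r = 3·2^r + r`, the index at which the second copy of `3·2^r`
occurs in `a`. For `f r ≤ n < f (r+1)` exactly `r + 1` repeats occur among `a(1), …, a(n)`,
so `a(n) = n - r`.
Hence on the block `f r < d ≤ f (r+1) + 1` the increments `b(d+1) - b(d) = a(d-1) = d - 1 - r`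
are those of the quadratic `g(d, r) = bClosedForm d r`, and consecutive quadratics `g(·, r)` and
`g(·, r+1)` agree at `d = f (r+1) + 1`; induction over the blocks, starting from `b(4) = 9`. -/

def aSeq (n : ℕ) : ℕ :=
  n + 1 - ((Finset.range n).filter (fun r => 3 * 2 ^ r + r ≤ n)).card

def bFun (d : ℕ) : ℕ := 4 + ∑ i ∈ Finset.Icc 1 (d - 2), aSeq i

theorem StrictMono.existsUnique_lt_le_succ {f : ℕ → ℕ} (hf : StrictMono f) {d : ℕ}
    (hd : f 0 < d) :
    ∃! r, f r < d ∧ d ≤ f (r + 1) := by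
  have hex : ∃ r, d ≤ f (r + 1) := ⟨d, hf.le_apply.trans (hf.monotone d.le_succ)⟩
  refine ⟨Nat.find hex, ⟨?_, Nat.find_spec hex⟩, ?_⟩
  · rcases h : Nat.find hex with _ | k
    · exact hd
    · exact not_le.mp (Nat.find_min hex (h ▸ k.lt_succ_self))
  · rintro s ⟨hs₁, hs₂⟩
    refine le_antisymm (not_lt.mp fun h => ?_) (Nat.find_min' hex hs₂)
    exact (hs₁.trans_le (Nat.find_spec hex)).not_ge (hf.monotone h)

def repeatIndex (r : ℕ) : ℕ := 3 * 2 ^ r + r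

theorem repeatIndex_strictMono : StrictMono repeatIndex :=
  fun _ _ h => add_lt_add_of_le_of_lt (by gcongr; omega) h

theorem aSeq_eq_sub {r n : ℕ} (h₁ : repeatIndex r ≤ n) (h₂ : n < repeatIndex (r + 1)) :
    aSeq n = n - r := by
  have hcount : (Finset.range n).filter (fun s => 3 * 2 ^ s + s ≤ n) = Finset.range (r + 1) := by
    ext s
    simp only [Finset.mem_filter, Finset.mem_range, Nat.lt_succ_iff]
    change s < n ∧ repeatIndex s ≤ n ↔ s ≤ r
    constructor
    · rintro ⟨-, hs⟩
      exact Nat.lt_succ_iff.mp (repeatIndex_strictMono.lt_iff_lt.mp (hs.trans_lt h₂))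
    · intro hs
      have hsr := (repeatIndex_strictMono.monotone hs).trans h₁
      exact ⟨(Nat.lt_add_of_pos_left (by positivity)).trans_le hsr, hsr⟩
  rw [aSeq, hcount, Finset.card_range]
  omega

theorem bFun_succ {d : ℕ} (hd : 2 ≤ d) : bFun (d + 1) = bFun d + aSeq (d - 1) := by
  obtain ⟨n, rfl⟩ := Nat.exists_eq_add_of_le' hd
  change 4 + ∑ i ∈ Finset.Icc 1 (n + 1), aSeq i
    = 4 + ∑ i ∈ Finset.Icc 1 n, aSeq i + aSeq (n + 1)
  rw [Finset.sum_Icc_succ_top (Nat.le_add_left 1 n), add_assoc]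

def bClosedForm (d r : ℕ) : ℚ :=
  (d : ℚ) ^ 2 / 2 - (d : ℚ) * (2 * (r : ℚ) + 3) / 2
    + 6 * 2 ^ r + ((r : ℚ) + 1) * ((r : ℚ) + 2) / 2

theorem bClosedForm_succ (d r : ℕ) : bClosedForm (d + 1) r = bClosedForm d r + d - r - 1 := by
  simp only [bClosedForm]
  push_cast
  ring

theorem bClosedForm_repeatIndex_succ (r : ℕ) :
    bClosedForm (repeatIndex (r + 1) + 1) (r + 1) = bClosedForm (repeatIndex (r + 1) + 1) r := by
  simp only [bClosedForm, repeatIndex]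
  push_cast
  ring

theorem bFun_eq_bClosedForm_of_base {r : ℕ}
    (hbase : (bFun (repeatIndex r + 1) : ℚ) = bClosedForm (repeatIndex r + 1) r) {d : ℕ}
    (h₁ : repeatIndex r < d) (h₂ : d ≤ repeatIndex (r + 1) + 1) :
    (bFun d : ℚ) = bClosedForm d r := by
  induction d, h₁ using Nat.le_induction with
  | base => exact hbase
  | succ d hd ih =>
    have hr : r ≤ repeatIndex r := repeatIndex_strictMono.le_apply
    have h₃ : 3 ≤ repeatIndex r := repeatIndex_strictMono.monotone r.zero_le
    rw [bFun_succ (by omega), aSeq_eq_sub (r := r) (by omega) (by omega), bClosedForm_succ,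
      Nat.cast_add, ih (by omega), Nat.cast_sub (by omega), Nat.cast_sub (by omega)]
    push_cast
    ring

theorem bFun_eq_bClosedForm (r : ℕ) {d : ℕ} (h₁ : repeatIndex r < d)
    (h₂ : d ≤ repeatIndex (r + 1) + 1) : (bFun d : ℚ) = bClosedForm d r := by
  induction r generalizing d with
  | zero =>
    refine bFun_eq_bClosedForm_of_base ?_ h₁ h₂
    rw [show bFun (repeatIndex 0 + 1) = 9 by decide]
    norm_num [bClosedForm, repeatIndex]
  | succ r ih =>
    refine bFun_eq_bClosedForm_of_base ?_ h₁ h₂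
    rw [bClosedForm_repeatIndex_succ]
    exact ih ((repeatIndex_strictMono r.lt_succ_self).trans_le (Nat.le_succ _)) le_rfl

/-- For every `d ≥ 4` there is a unique `r ≥ 0` with
`3·2^r + r + 1 ≤ d ≤ 3·2^{r+1} + r + 1`, and for this `r`,
`b(d) = d²/2 − d(2r+3)/2 + 6·2^r + (r+1)(r+2)/2`. -/
theorem b_closed_formula (d : ℕ) (hd : 4 ≤ d) :
    (∃! r : ℕ, 3 * 2 ^ r + r + 1 ≤ d ∧ d ≤ 3 * 2 ^ (r + 1) + r + 1) ∧
    (∀ r : ℕ, 3 * 2 ^ r + r + 1 ≤ d → d ≤ 3 * 2 ^ (r + 1) + r + 1 →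
      (bFun d : ℚ) = (d : ℚ) ^ 2 / 2 - (d : ℚ) * (2 * (r : ℚ) + 3) / 2
        + 6 * 2 ^ r + ((r : ℚ) + 1) * ((r : ℚ) + 2) / 2) :=
  ⟨repeatIndex_strictMono.existsUnique_lt_le_succ hd,
    fun r h₁ h₂ => bFun_eq_bClosedForm r h₁ (h₂.trans (Nat.le_succ _))⟩
end

section
/- For every integer n ≥ 2, the minimum number of complete bipartite subgraphs of the complete graph K_n whose edge sets partition the edge set of K_n equals n − 1; equivalently, bp_1(K_n) = n − 1. -/
/-- The number of bipartite cliques (given by their parts `X i`, `Y i`) of the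
covering that contain the edge `uv`. -/
def coverCount {N m : ℕ} (X Y : Fin m → Finset (Fin N)) (u v : Fin N) : ℕ :=
  (Finset.univ.filter (fun i => (u ∈ X i ∧ v ∈ Y i) ∨ (u ∈ Y i ∧ v ∈ X i))).card

/-- `K_N` admits a collection of `m` complete bipartite subgraphs (each given by a
pair of disjoint nonempty vertex sets) such that every edge of `K_N` lies in at
least one and at most `k` of them. -/
def HasBipCover (k N m : ℕ) : Prop :=
  ∃ X Y : Fin m → Finset (Fin N),
    (∀ i, (X i).Nonempty ∧ (Y i).Nonempty ∧ Disjoint (X i) (Y i)) ∧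
    ∀ u v : Fin N, u ≠ v → 1 ≤ coverCount X Y u v ∧ coverCount X Y u v ≤ k

/-- `bp_k(K_N)`: the minimum number of complete bipartite subgraphs of `K_N`
covering every edge at least once and at most `k` times. -/
noncomputable def bp (k N : ℕ) : ℕ := sInf {m : ℕ | HasBipCover k N m}

lemma coverCount_comm {N m : ℕ} (X Y : Fin m → Finset (Fin N)) (u v : Fin N) :
    coverCount X Y u v = coverCount X Y v u := by
  unfold coverCount
  congr 1
  apply Finset.filter_congr
  intro i _
  tauto

lemma upper (n : ℕ) (hn : 2 ≤ n) : HasBipCover 1 n (n - 1) := by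
  refine ⟨fun i => {⟨i.1, lt_of_lt_of_le i.2 (Nat.sub_le n 1)⟩},
          fun i => Finset.univ.filter (fun v => i.1 < v.1), fun i => ⟨⟨_, Finset.mem_singleton_self _⟩, ?_, ?_⟩, ?_⟩
  · refine ⟨⟨i.1 + 1, by omega⟩, ?_⟩
    simp
  · rw [Finset.disjoint_left]
    intro a ha hb
    simp [Fin.ext_iff] at ha hb
    omega
  · -- count = 1 for u ≠ v
    have key : ∀ u v : Fin n, u.1 < v.1 →
        coverCount (fun i : Fin (n-1) => ({⟨i.1, lt_of_lt_of_le i.2 (Nat.sub_le n 1)⟩} : Finset (Fin n)))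
          (fun i => Finset.univ.filter (fun w => i.1 < w.1)) u v = 1 := by
      intro u v huv
      unfold coverCount
      rw [Finset.card_eq_one]
      refine ⟨⟨u.1, by omega⟩, ?_⟩
      ext i
      simp only [Finset.mem_filter, Finset.mem_univ, true_and, Finset.mem_singleton,
        Fin.ext_iff]
      omega
    intro u v huv
    rcases Nat.lt_or_ge u.1 v.1 with h | h
    · rw [key u v h]; exact ⟨le_refl _, le_refl _⟩
    · have h' : v.1 < u.1 := by
        rcases Nat.lt_or_ge v.1 u.1 with h2 | h2
        · exact h2
        · exact absurd (Fin.ext (le_antisymm h2 h)) huv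
      rw [coverCount_comm, key v u h']
      exact ⟨le_refl _, le_refl _⟩

lemma factor_lemma {n : ℕ} (x : Fin n → ℝ) (S T : Finset (Fin n)) :
    ∑ u, ∑ v, (if u ∈ S ∧ v ∈ T then (1:ℝ) else 0) * (x u * x v)
      = (∑ u ∈ S, x u) * (∑ v ∈ T, x v) := by
  calc ∑ u, ∑ v, (if u ∈ S ∧ v ∈ T then (1:ℝ) else 0) * (x u * x v)
      = ∑ u, ∑ v, (if u ∈ S then x u else 0) * (if v ∈ T then x v else 0) := by
        refine Finset.sum_congr rfl fun u _ => Finset.sum_congr rfl fun v _ => ?_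
        by_cases h1 : u ∈ S <;> by_cases h2 : v ∈ T <;> simp [h1, h2]
    _ = (∑ u, if u ∈ S then x u else 0) * (∑ v, if v ∈ T then x v else 0) :=
        (Finset.sum_mul_sum _ _ _ _).symm
    _ = (∑ u ∈ S, x u) * (∑ v ∈ T, x v) := by
        rw [Finset.sum_ite_mem, Finset.sum_ite_mem, Finset.univ_inter, Finset.univ_inter]

lemma lower (n m : ℕ) (h : HasBipCover 1 n m) : n - 1 ≤ m := by
  by_contra hlt
  push_neg at hlt
  have hm1 : m + 1 < n := by omega
  obtain ⟨X, Y, hXY, hcov⟩ := h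
  set f : (Fin n → ℝ) →ₗ[ℝ] (Fin (m + 1) → ℝ) :=
    { toFun := fun x j => if h : (j : ℕ) < m then ∑ u ∈ X ⟨j, h⟩, x u else ∑ u, x u
      map_add' := by
        intro a b
        funext j
        by_cases hj : (j : ℕ) < m <;> simp [hj, Finset.sum_add_distrib]
      map_smul' := by
        intro c a
        funext j
        by_cases hj : (j : ℕ) < m <;> simp [hj, Finset.mul_sum] } with hf
  have hninj : ¬ Function.Injective f := by
    intro hinj
    have := LinearMap.finrank_le_finrank_of_injective hinj
    simp only [Module.finrank_fintype_fun_eq_card, Fintype.card_fin] at this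
    omega
  rw [Function.not_injective_iff] at hninj
  obtain ⟨a, b, hab, hne⟩ := hninj
  set x : Fin n → ℝ := a - b with hx
  have hx0 : x ≠ 0 := sub_ne_zero_of_ne hne
  have hfx : f x = 0 := by rw [hx, map_sub, hab, sub_self]
  have hS : ∑ u, x u = 0 := by
    have := congrFun hfx ⟨m, Nat.lt_succ_self m⟩
    simpa [hf] using this
  have hSX : ∀ i : Fin m, ∑ u ∈ X i, x u = 0 := by
    intro i
    have := congrFun hfx ⟨i.1, Nat.lt_succ_of_lt i.2⟩
    simpa [hf, i.2] using this
  have hcc : ∀ u v : Fin n, (coverCount X Y u v : ℝ) = if u = v then 0 else 1 := by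
    intro u v
    by_cases huv : u = v
    · subst huv
      have h0 : coverCount X Y u u = 0 := by
        unfold coverCount
        rw [Finset.card_eq_zero, Finset.filter_eq_empty_iff]
        intro i _
        rintro (⟨h1, h2⟩ | ⟨h1, h2⟩)
        · exact (hXY i).2.2.forall_ne_finset h1 h2 rfl
        · exact (hXY i).2.2.forall_ne_finset h2 h1 rfl
      simp [h0]
    · obtain ⟨h1, h2⟩ := hcov u v huv
      have : coverCount X Y u v = 1 := le_antisymm h2 h1
      simp [huv, this]
  have expand : ∀ u v : Fin n, (coverCount X Y u v : ℝ)
      = ∑ i : Fin m, ((if u ∈ X i ∧ v ∈ Y i then (1:ℝ) else 0)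
          + (if u ∈ Y i ∧ v ∈ X i then (1:ℝ) else 0)) := by
    intro u v
    unfold coverCount
    rw [Finset.card_filter]
    push_cast
    refine Finset.sum_congr rfl fun i _ => ?_
    by_cases h1 : u ∈ X i ∧ v ∈ Y i
    · by_cases h2 : u ∈ Y i ∧ v ∈ X i
      · exact absurd rfl ((hXY i).2.2.forall_ne_finset h1.1 h2.1)
      · simp [h1, h2]
    · by_cases h2 : u ∈ Y i ∧ v ∈ X i <;> simp [h1, h2]
  have key1 : ∑ u, ∑ v, (coverCount X Y u v : ℝ) * (x u * x v)
      = - ∑ u, x u ^ 2 := by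
    calc ∑ u, ∑ v, (coverCount X Y u v : ℝ) * (x u * x v)
        = ∑ u, ∑ v, (x u * x v - if v = u then x u * x v else 0) := by
          refine Finset.sum_congr rfl fun u _ => Finset.sum_congr rfl fun v _ => ?_
          rw [hcc]
          by_cases h : u = v <;> simp [h, eq_comm]
      _ = ∑ u : Fin n, ((x u * ∑ v, x v) - x u * x u) := by
          refine Finset.sum_congr rfl fun u _ => ?_
          rw [Finset.sum_sub_distrib, Finset.sum_ite_eq' Finset.univ u, ← Finset.mul_sum]
          simp
      _ = - ∑ u, x u ^ 2 := by
          rw [Finset.sum_sub_distrib]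
          simp [hS, pow_two]
  have key2 : ∑ u, ∑ v, (coverCount X Y u v : ℝ) * (x u * x v)
      = ∑ i : Fin m, 2 * ((∑ u ∈ X i, x u) * (∑ v ∈ Y i, x v)) := by
    calc ∑ u, ∑ v, (coverCount X Y u v : ℝ) * (x u * x v)
        = ∑ u, ∑ v, ∑ i : Fin m, ((if u ∈ X i ∧ v ∈ Y i then (1:ℝ) else 0)
            + (if u ∈ Y i ∧ v ∈ X i then (1:ℝ) else 0)) * (x u * x v) := by
          refine Finset.sum_congr rfl fun u _ => Finset.sum_congr rfl fun v _ => ?_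
          rw [expand, Finset.sum_mul]
      _ = ∑ i : Fin m, ∑ u, ∑ v, ((if u ∈ X i ∧ v ∈ Y i then (1:ℝ) else 0)
            + (if u ∈ Y i ∧ v ∈ X i then (1:ℝ) else 0)) * (x u * x v) := by
          rw [show (∑ u, ∑ v, ∑ i : Fin m, ((if u ∈ X i ∧ v ∈ Y i then (1:ℝ) else 0)
              + (if u ∈ Y i ∧ v ∈ X i then (1:ℝ) else 0)) * (x u * x v))
              = ∑ u, ∑ i : Fin m, ∑ v, ((if u ∈ X i ∧ v ∈ Y i then (1:ℝ) else 0)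
              + (if u ∈ Y i ∧ v ∈ X i then (1:ℝ) else 0)) * (x u * x v)
            from Finset.sum_congr rfl fun u _ => Finset.sum_comm]
          exact Finset.sum_comm
      _ = ∑ i : Fin m, 2 * ((∑ u ∈ X i, x u) * (∑ v ∈ Y i, x v)) := by
          refine Finset.sum_congr rfl fun i _ => ?_
          have : ∑ u, ∑ v, ((if u ∈ X i ∧ v ∈ Y i then (1:ℝ) else 0)
              + (if u ∈ Y i ∧ v ∈ X i then (1:ℝ) else 0)) * (x u * x v)
              = (∑ u, ∑ v, (if u ∈ X i ∧ v ∈ Y i then (1:ℝ) else 0) * (x u * x v))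
              + (∑ u, ∑ v, (if u ∈ Y i ∧ v ∈ X i then (1:ℝ) else 0) * (x u * x v)) := by
            rw [← Finset.sum_add_distrib]
            refine Finset.sum_congr rfl fun u _ => ?_
            rw [← Finset.sum_add_distrib]
            refine Finset.sum_congr rfl fun v _ => ?_
            ring
          rw [this, factor_lemma, factor_lemma]
          ring
  have hzero : ∑ u, x u ^ 2 = 0 := by
    have h0 : (0:ℝ) = - ∑ u, x u ^ 2 := by
      rw [← key1, key2]
      simp [hSX]
    linarith
  have : x = 0 := by
    funext u
    have hu := (Finset.sum_eq_zero_iff_of_nonneg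
      (fun v _ => sq_nonneg (x v))).mp hzero u (Finset.mem_univ u)
    simpa using sq_eq_zero_iff.mp hu
  exact hx0 this


/-- Graham–Pollak: for every `n ≥ 2`, the minimum number of complete bipartite
subgraphs of `K_n` whose edge sets partition the edge set of `K_n` equals `n - 1`;
equivalently, `bp_1(K_n) = n - 1`. -/
theorem bp_one_eq (n : ℕ) (hn : 2 ≤ n) : bp 1 n = n - 1 := by
  have h1 : HasBipCover 1 n (n - 1) := upper n hn
  refine le_antisymm (Nat.sInf_le h1) ?_
  exact le_csInf ⟨n - 1, h1⟩ fun m hm => lower n m hm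
end
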